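/- arXiv:1902.03321 — 3 statements merged into one kernel-verified Lean document; each statement's English description precedes it below -/
import Mathlib

section
/- For k ≥ 2, let m(k) be the number of 4-element subsets A of the leaves of the complete balanced binary tree with 2^k leaves such that the restriction tree to A has the balanced shape Bal_4. Then m satisfies the recurrence m(k) = 2·m(k−1) + C(2^{k−1}, 2)² (with m(1) = 0), has closed form m(k) = Σ_{i=1}^{k−1} 2^{k−i−1}·C(2^i, 2)², and satisfies m(k)/C(2^k, 4) = (3·2^k − 5)/(7·2^k − 21); consequently m(k)/C(2^k,4) → 3/7 as k → ∞. -/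
/-! ## Rooted binary trees, shapes, restriction, distributions -/

/-- Rooted binary trees with leaves labelled by `α`:
a tree is either a single (labelled) leaf, or an (ordered) pair of subtrees. -/
inductive RBT (α : Type) : Type
  | leaf (a : α) : RBT α
  | node (l r : RBT α) : RBT α
  deriving DecidableEq

namespace RBT

variable {α β : Type}

/-- The multiset of leaf labels of a tree. -/
def leaves : RBT α → Multiset α
  | leaf a => {a}
  | node l r => leaves l + leaves r

/-- The number of leaves of a tree. -/
def numLeaves : RBT α → ℕ
  | leaf _ => 1
  | node l r => numLeaves l + numLeaves r

/-- Relabel the leaves of a tree. -/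
def map (f : α → β) : RBT α → RBT β
  | leaf a => leaf (f a)
  | node l r => node (map f l) (map f r)

end RBT

/-- Unlabelled rooted binary trees. -/
abbrev UTree : Type := RBT Unit

namespace RBT

variable {α : Type}

/-- Forget the leaf labels of a tree. -/
def forget (t : RBT α) : UTree := t.map fun _ => ()

/-- Structural comparison on unlabelled trees (a leaf is smaller than an internal
node; internal nodes are compared lexicographically on their children). -/
def cmpT : UTree → UTree → Ordering
  | leaf _, leaf _ => .eq
  | leaf _, node _ _ => .lt
  | node _ _, leaf _ => .gt
  | node a b, node c d => (cmpT a c).then (cmpT b d)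

/-- Canonical form (AHU) of an unlabelled rooted binary tree: recursively put the
two children of every internal vertex in nondecreasing `cmpT` order.  Two rooted
binary trees are isomorphic (equal as *shapes*) iff their canonical forms are
equal, so canonical forms faithfully encode the set `RB_U` of tree shapes. -/
def canon : UTree → UTree
  | leaf a => leaf a
  | node l r =>
      let l' := canon l
      let r' := canon r
      if cmpT l' r' = Ordering.gt then node r' l' else node l' r'

/-- The shape (leaf-relabelling isomorphism class, encoded as a canonical form)
of a labelled tree. -/
def shape (t : RBT α) : UTree := canon (forget t)

/-- Restriction `T|_A` of a tree to the leaves with labels in `A`: delete all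
leaves outside `A` and suppress the resulting degree-two vertices (the result is
rooted at the most recent common ancestor of `A`); `none` if no leaf survives. -/
def restrict [DecidableEq α] (A : Finset α) : RBT α → Option (RBT α)
  | leaf a => if a ∈ A then some (leaf a) else none
  | node l r =>
      match restrict A l, restrict A r with
      | some l', some r' => some (node l' r')
      | some l', none => some l'
      | none, some r' => some r'
      | none, none => none

end RBT

/-- `T ∈ RB_L(n)`: the leaves of `T` are labelled bijectively by `[n] = {0, …, n-1}`. -/
def IsPhylo (n : ℕ) (T : RBT ℕ) : Prop := T.leaves = Multiset.range n

instance (n : ℕ) (T : RBT ℕ) : Decidable (IsPhylo n T) :=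
  inferInstanceAs (Decidable (T.leaves = Multiset.range n))

/-- `p` is a probability distribution on `RB_L(n)` (viewed as a vector with
coordinates indexed by labelled trees): nonnegative, supported on `RB_L(n)`,
with total mass one. -/
structure IsDist (n : ℕ) (p : RBT ℕ → ℝ) : Prop where
  nonneg : ∀ T, 0 ≤ p T
  supp : ∀ T, ¬ IsPhylo n T → p T = 0
  total : HasSum p 1

/-- `p` is exchangeable: relabelling the leaves by any permutation of `[n]`
does not change probabilities. -/
def Exchangeable (n : ℕ) (p : RBT ℕ → ℝ) : Prop :=
  ∀ σ : Equiv.Perm ℕ, (∀ i, i < n → σ i < n) → ∀ T : RBT ℕ, p (T.map ⇑σ) = p T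

/-- `EX_n`: the exchangeable probability distributions on `RB_L(n)`. -/
def EX (n : ℕ) : Set (RBT ℕ → ℝ) := {p | IsDist n p ∧ Exchangeable n p}

/-- `O(u)`: the labelled trees in `RB_L(n)` whose shape is (the shape of) `u`. -/
def orbitSet (n : ℕ) (u : UTree) : Set (RBT ℕ) :=
  {T | IsPhylo n T ∧ T.shape = RBT.canon u}

/-- `p_u`: the exchangeable distribution that is uniform on `O(u)` and zero
elsewhere. -/
noncomputable def pShape (n : ℕ) (u : UTree) : RBT ℕ → ℝ := fun T =>
  if IsPhylo n T ∧ T.shape = RBT.canon u then ((orbitSet n u).ncard : ℝ)⁻¹ else 0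

/-- Marginalization map `π_n` from distributions on `RB_L(m)` to distributions on
`RB_L(n)`: `π_n(p)(T) = Σ_{S ∈ RB_L(m), S|_{[n]} = T} p(S)`. -/
noncomputable def marg (m n : ℕ) (p : RBT ℕ → ℝ) : RBT ℕ → ℝ := fun T =>
  ∑' S : RBT ℕ, if IsPhylo m S ∧ RBT.restrict (Finset.range n) S = some T then p S else 0

/-- `EX_n^m = π_n(EX_m)`: the `m`-sampling consistent exchangeable distributions
on `RB_L(n)`. -/
def EXP (n m : ℕ) : Set (RBT ℕ → ℝ) := marg m n '' EX m

/-- `EX_n^∞ = ⋂_{m ≥ n} EX_n^m`: the exchangeable and (infinitely) sampling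
consistent distributions on `RB_L(n)`. -/
def EXinf (n : ℕ) : Set (RBT ℕ → ℝ) := ⋂ (m : ℕ) (_ : n ≤ m), EXP n m

/-- The shapes with `n` leaves (`RB_U(n)`), encoded as canonical forms. -/
def ShapeOn (n : ℕ) : Type := {u : UTree // RBT.canon u = u ∧ u.numLeaves = n}

/-! ## Particular shapes -/

/-- The comb (caterpillar) shape `Comb_k` with `k` leaves. -/
def combU : ℕ → UTree
  | 0 => .leaf ()
  | 1 => .leaf ()
  | n + 2 => .node (.leaf ()) (combU (n + 1))

/-- `comb(t, k)`: the comb with `k` leaves in which one of the two deepest leaves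
is replaced by the tree `t`. -/
def combWith (t : UTree) : ℕ → UTree
  | 0 => t
  | 1 => t
  | n + 2 => .node (.leaf ()) (combWith t (n + 1))

/-- The balanced shape `Bal_4` on four leaves (two cherries joined at the root). -/
def bal4U : UTree := .node (.node (.leaf ()) (.leaf ())) (.node (.leaf ()) (.leaf ()))

/-- The giraffe shape `Gir_5 = comb(Bal_4, 2)` on five leaves. -/
def gir5U : UTree := combWith bal4U 2

/-- The balanced shape `Bal_5` on five leaves (a cherry and a three-leaf comb
joined at the root). -/
def bal5U : UTree := .node (.node (.leaf ()) (.leaf ())) (combU 3)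

/-- `bicomb(a, b)`: the shape obtained by joining `Comb_a` and `Comb_b` at a new
root. -/
def bicombU (a b : ℕ) : UTree := .node (combU a) (combU b)

/-- The complete balanced binary tree with `2^k` leaves. -/
def fullBal : ℕ → UTree
  | 0 => .leaf ()
  | k + 1 => .node (fullBal k) (fullBal k)

/-- A shape is maximally balanced if at every internal vertex the numbers of
leaves of the two child subtrees differ by at most one. -/
def IsMaxBalanced : UTree → Prop
  | .leaf _ => True
  | .node l r =>
      (l.numLeaves ≤ r.numLeaves + 1 ∧ r.numLeaves ≤ l.numLeaves + 1)
        ∧ IsMaxBalanced l ∧ IsMaxBalanced r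

/-! ## Counting restriction subtrees -/

/-- Label the leaves of an unlabelled tree `0, 1, 2, …` from left to right
(auxiliary function threading the next fresh label). -/
def labelFrom : UTree → ℕ → RBT ℕ × ℕ
  | .leaf _, k => (.leaf k, k + 1)
  | .node l r, k =>
      let pl := labelFrom l k
      let pr := labelFrom r pl.2
      (.node pl.1 pr.1, pr.2)

/-- A labelled representative of an unlabelled tree, with distinct leaf labels. -/
def label (u : UTree) : RBT ℕ := (labelFrom u 0).1

/-- The number of `k`-element subsets `A` of the leaves of (a labelled
representative of) `u` such that the restriction tree `u|_A` has shape `s`. -/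
def countRestr (u : UTree) (s : UTree) (k : ℕ) : ℕ :=
  (((label u).leaves.toFinset.powersetCard k).filter
    (fun A => Option.map RBT.shape (RBT.restrict A (label u)) = some (RBT.canon s))).card

/-- `c_5(u)`: the number of `5`-element subsets of the leaves of `u` whose
restriction tree is the five-leaf comb. -/
def c5 (u : UTree) : ℕ := countRestr u (combU 5) 5

/-! ## One-hole contexts (for subtree-swapping statements) -/

/-- One-hole contexts for unlabelled rooted binary trees: a position in a tree at
which a subtree may be substituted. -/
inductive Ctx : Type
  | hole : Ctx
  | nodeL (c : Ctx) (r : UTree) : Ctx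
  | nodeR (l : UTree) (c : Ctx) : Ctx

/-- Fill the hole of a context with a tree. -/
def Ctx.fill : Ctx → UTree → UTree
  | .hole, t => t
  | .nodeL c r, t => .node (c.fill t) r
  | .nodeR l c, t => .node l (c.fill t)

/-! ## The multinomial model -/

/-- A multiset of edges of a tree shape, encoded as the shape with a
multiplicity attached to every vertex (each vertex stands for the edge directly
above it; the root vertex stands for the root edge of the extended tree). -/
inductive MTree : Type
  | leaf (k : ℕ) : MTree
  | node (k : ℕ) (l r : MTree) : MTree
  deriving DecidableEq

namespace MTree

/-- The underlying tree shape of a multiplicity assignment. -/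
def strip : MTree → UTree
  | leaf _ => .leaf ()
  | node _ l r => .node (strip l) (strip r)

/-- The total number of chosen edges (with multiplicity). -/
def total : MTree → ℕ
  | leaf k => k
  | node k l r => k + total l + total r

/-- The product of the factorials of the multiplicities (denominator of the
multinomial coefficient). -/
def factProd : MTree → ℕ
  | leaf k => k.factorial
  | node k l r => k.factorial * factProd l * factProd r

/-- The product `Π_e t_e^{m_A(e)}` of edge-parameter powers, for the parameter
vector assigning `c` to every pendant edge and `0` to every other edge. -/
noncomputable def wProd (c : ℝ) : MTree → ℝ
  | leaf k => c ^ k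
  | node k l r => (0 : ℝ) ^ k * wProd c l * wProd c r

/-- Join two optional trees at a new root. -/
def mergeO : Option UTree → Option UTree → Option UTree
  | some l, some r => some (.node l r)
  | some l, none => some l
  | none, some r => some r
  | none, none => none

/-- Attach `k` new leaves along the edge above an (optional) already-built tree. -/
def attach : ℕ → Option UTree → Option UTree
  | 0, s => s
  | k + 1, s =>
      match attach k s with
      | none => some (.leaf ())
      | some t => some (.node (.leaf ()) t)

/-- `T_A`: attach one new leaf to an edge for each of its occurrences in the
multiset `A`, and restrict the resulting tree to the new leaves. -/
def build : MTree → Option UTree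
  | leaf k => attach k none
  | node k l r => attach k (mergeO (build l) (build r))

end MTree

/-- The probability, under the multinomial model on the shape `T` (with edge
parameter `c` on every pendant edge and `0` on every other edge), that a random
multiset `A` of `n` edges yields a tree `T_A` of shape `s`:
`d(s) = Σ_{A, T_A = s} C(n; m_A) Π_e t_e^{m_A(e)}`. -/
noncomputable def multinomDist (T : UTree) (c : ℝ) (n : ℕ) (s : UTree) : ℝ :=
  ∑' a : MTree,
    if a.strip = T ∧ a.total = n ∧ Option.map RBT.canon a.build = some (RBT.canon s) then
      ((n.factorial : ℝ) / (a.factProd : ℝ)) * MTree.wProd c a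
    else 0

/-!
A quartet `A` of leaves of `node l r` (with distinct labels) restricts to `Bal_4` exactly when
it lies inside `l` or inside `r` and restricts to `Bal_4` there, or when it meets each side in
two leaves, since the restriction is then two cherries joined at the root. So with `N = 2^k`,
`m(k+1) = 2 m(k) + C(N, 2)^2`, which solves to `m(k) = N(N-1)(N-2)(3N-5)/168`; dividing by
`C(N, 4) = N(N-1)(N-2)(N-3)/24` gives `(3N-5)/(7N-21)`, which tends to `3/7`.
-/

namespace Finset

variable {α : Type*} [DecidableEq α] {s t : Finset α}

theorem union_inter_eq_left_of_disjoint (h : Disjoint s t) {B C : Finset α} (hB : B ⊆ s)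
    (hC : C ⊆ t) : (B ∪ C) ∩ s = B := by
  rw [union_inter_distrib_right, inter_eq_left.mpr hB,
    disjoint_iff_inter_eq_empty.mp (h.symm.mono_left hC), union_empty]

theorem mem_image_union_powersetCard_product (h : Disjoint s t) {m n : ℕ} {A : Finset α} :
    A ∈ (s.powersetCard m ×ˢ t.powersetCard n).image (fun p => p.1 ∪ p.2) ↔
      A ⊆ s ∪ t ∧ (A ∩ s).card = m ∧ (A ∩ t).card = n := by
  simp only [mem_image, mem_product, mem_powersetCard, Prod.exists]
  constructor
  · rintro ⟨B, C, ⟨⟨hB, rfl⟩, hC, rfl⟩, rfl⟩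
    refine ⟨union_subset_union hB hC, by rw [union_inter_eq_left_of_disjoint h hB hC], ?_⟩
    rw [union_comm, union_inter_eq_left_of_disjoint h.symm hC hB]
  · rintro ⟨hA, rfl, rfl⟩
    exact ⟨A ∩ s, A ∩ t, ⟨⟨inter_subset_right, rfl⟩, inter_subset_right, rfl⟩,
      by rw [← inter_union_distrib_left, inter_eq_left.mpr hA]⟩

theorem card_image_union_powersetCard_product (h : Disjoint s t) (m n : ℕ) :
    ((s.powersetCard m ×ˢ t.powersetCard n).image (fun p => p.1 ∪ p.2)).card =
      s.card.choose m * t.card.choose n := by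
  rw [card_image_of_injOn, card_product, card_powersetCard, card_powersetCard]
  rintro ⟨B, C⟩ hBC ⟨B', C'⟩ hBC' heq
  simp only [coe_product, Set.mem_prod, mem_coe, mem_powersetCard] at hBC hBC' heq
  refine Prod.ext ?_ ?_
  · rw [← union_inter_eq_left_of_disjoint h hBC.1.1 hBC.2.1,
      ← union_inter_eq_left_of_disjoint h hBC'.1.1 hBC'.2.1, heq]
  · rw [← union_inter_eq_left_of_disjoint h.symm hBC.2.1 hBC.1.1,
      ← union_inter_eq_left_of_disjoint h.symm hBC'.2.1 hBC'.1.1, union_comm, heq, union_comm]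

end Finset

namespace RBT

variable {α : Type}

theorem one_le_numLeaves (t : RBT α) : 1 ≤ t.numLeaves := by
  induction t with
  | leaf => rfl
  | node l r ihl ihr => simp only [numLeaves]; omega

theorem card_leaves (t : RBT α) : Multiset.card t.leaves = t.numLeaves := by
  induction t with
  | leaf => rfl
  | node l r ihl ihr => simp [leaves, numLeaves, ihl, ihr]

theorem numLeaves_canon (u : UTree) : (canon u).numLeaves = u.numLeaves := by
  induction u with
  | leaf => rfl
  | node l r ihl ihr => simp only [canon]; split <;> simp only [numLeaves, ihl, ihr]; omega

theorem numLeaves_forget (t : RBT α) : (forget t).numLeaves = t.numLeaves := by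
  induction t with
  | leaf => rfl
  | node l r ihl ihr => simp_all [forget, map, numLeaves]

theorem numLeaves_shape (t : RBT α) : t.shape.numLeaves = t.numLeaves := by
  rw [shape, numLeaves_canon, numLeaves_forget]

theorem shape_eq_cherry_iff {t : RBT α} :
    t.shape = .node (.leaf ()) (.leaf ()) ↔ t.numLeaves = 2 := by
  refine ⟨fun h => by simpa [numLeaves, h] using (numLeaves_shape t).symm, fun h => ?_⟩
  match t, h with
  | node (leaf _) (leaf _), _ => rfl
  | node (node l r) s, h | node s (node l r), h =>
    simp only [numLeaves] at h
    have := one_le_numLeaves l; have := one_le_numLeaves r; have := one_le_numLeaves s; omega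

theorem shape_node_eq_bal4U_iff {l r : RBT α} :
    (node l r).shape = bal4U ↔ l.numLeaves = 2 ∧ r.numLeaves = 2 := by
  have h : (node l r).shape = .node l.shape r.shape ∨
      (node l r).shape = .node r.shape l.shape := by
    simp only [shape, forget, map, canon]
    split <;> simp
  rw [← shape_eq_cherry_iff, ← shape_eq_cherry_iff]
  rcases h with h | h <;> simp [h, bal4U, and_comm]

variable [DecidableEq α]

theorem leaves_restrict (A : Finset α) (t : RBT α) :
    (restrict A t).elim 0 leaves = t.leaves.filter (· ∈ A) := by
  induction t with
  | leaf a => by_cases h : a ∈ A <;> simp [restrict, leaves, Multiset.filter_singleton, h]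
  | node l r ihl ihr =>
    simp only [restrict, leaves, Multiset.filter_add, ← ihl, ← ihr]
    rcases restrict A l with _ | l' <;> rcases restrict A r with _ | r' <;> simp [leaves]

theorem restrict_eq_none_iff {A : Finset α} {t : RBT α} :
    restrict A t = none ↔ Disjoint t.leaves.toFinset A := by
  rw [Finset.disjoint_left]
  simp only [Multiset.mem_toFinset, ← Multiset.filter_eq_nil, ← leaves_restrict A t]
  rcases restrict A t with _ | t' <;> simp only [Option.elim, reduceCtorEq, false_iff]
  rw [← Multiset.card_eq_zero, card_leaves]
  exact Nat.one_le_iff_ne_zero.mp (one_le_numLeaves t')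

theorem numLeaves_of_restrict_eq_some {A : Finset α} {t t' : RBT α} (ht : t.leaves.Nodup)
    (h : restrict A t = some t') : t'.numLeaves = (t.leaves.toFinset ∩ A).card := by
  have := leaves_restrict A t
  rw [h, Option.elim_some] at this
  rw [← card_leaves, this, ← Finset.filter_mem_eq_inter, ← Multiset.toFinset_filter,
    Multiset.toFinset_card_of_nodup (ht.filter _)]

def bal4Quartets (t : RBT α) : Finset (Finset α) :=
  (t.leaves.toFinset.powersetCard 4).filter fun A => (restrict A t).map shape = some bal4U

theorem bal4Quartets_leaf (a : α) : bal4Quartets (leaf a) = ∅ := by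
  simp [bal4Quartets, leaves]

theorem bal4Quartets_node {l r : RBT α} (h : (node l r).leaves.Nodup) :
    bal4Quartets (node l r) = bal4Quartets l ∪ bal4Quartets r ∪
      (l.leaves.toFinset.powersetCard 2 ×ˢ r.leaves.toFinset.powersetCard 2).image
        (fun p => p.1 ∪ p.2) := by
  obtain ⟨hl, hr, hlr⟩ := Multiset.nodup_add.mp h
  have hLR := Multiset.disjoint_toFinset.mpr hlr
  ext A
  simp only [bal4Quartets, leaves, Multiset.toFinset_add, Finset.mem_union, Finset.mem_filter,
    Finset.mem_powersetCard, Finset.mem_image_union_powersetCard_product hLR, or_assoc, and_assoc]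
  set L := l.leaves.toFinset
  set R := r.leaves.toFinset
  rcases hAl : restrict A l with _ | l' <;> rcases hAr : restrict A r with _ | r'
  · have hL : Disjoint A L := (restrict_eq_none_iff.mp hAl).symm
    simp [restrict, hAl, hAr, Finset.disjoint_iff_inter_eq_empty.mp hL]
  · have hL : Disjoint A L := (restrict_eq_none_iff.mp hAl).symm
    have hsub : A ⊆ L ∪ R ↔ A ⊆ R :=
      ⟨hL.left_le_of_le_sup_left, fun h => h.trans Finset.subset_union_right⟩
    simp [restrict, hAl, hAr, Finset.disjoint_iff_inter_eq_empty.mp hL, hsub]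
  · have hR : Disjoint A R := (restrict_eq_none_iff.mp hAr).symm
    have hsub : A ⊆ L ∪ R ↔ A ⊆ L :=
      ⟨hR.left_le_of_le_sup_right, fun h => h.trans Finset.subset_union_left⟩
    simp [restrict, hAl, hAr, Finset.disjoint_iff_inter_eq_empty.mp hR, hsub]
  · have hAL : ¬ A ⊆ L := fun hs => by
      simp [restrict_eq_none_iff.mpr (hLR.symm.mono_right hs)] at hAr
    have hAR : ¬ A ⊆ R := fun hs => by
      simp [restrict_eq_none_iff.mpr (hLR.mono_right hs)] at hAl
    have hcard (hA : A ⊆ L ∪ R) : A.card = (A ∩ L).card + (A ∩ R).card := by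
      rw [← Finset.card_union_of_disjoint
        (hLR.mono Finset.inter_subset_right Finset.inter_subset_right),
        ← Finset.inter_union_distrib_left, Finset.inter_eq_left.mpr hA]
    simp only [restrict, hAl, hAr, Option.map_some, Option.some.injEq, shape_node_eq_bal4U_iff,
      numLeaves_of_restrict_eq_some hl hAl, numLeaves_of_restrict_eq_some hr hAr,
      Finset.inter_comm _ A, hAL, hAR, false_and, false_or]
    exact ⟨fun ⟨hA, _, h2⟩ => ⟨hA, h2⟩,
      fun ⟨hA, h2⟩ => ⟨hA, by rw [hcard hA, h2.1, h2.2], h2⟩⟩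

theorem subset_and_card_of_mem_bal4Quartets {t : RBT α} {A : Finset α}
    (hA : A ∈ bal4Quartets t) :
    A ⊆ t.leaves.toFinset ∧ A.card = 4 :=
  Finset.mem_powersetCard.mp (Finset.mem_filter.mp hA).1

theorem card_bal4Quartets_node {l r : RBT α} (h : (node l r).leaves.Nodup) :
    (bal4Quartets (node l r)).card = (bal4Quartets l).card + (bal4Quartets r).card +
      l.numLeaves.choose 2 * r.numLeaves.choose 2 := by
  obtain ⟨hl, hr, hlr⟩ := Multiset.nodup_add.mp h
  have hLR := Multiset.disjoint_toFinset.mpr hlr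
  have hlr_quartets : Disjoint (bal4Quartets l) (bal4Quartets r) := by
    refine Finset.disjoint_left.mpr fun A hAl hAr => ?_
    obtain ⟨hAL, hA4⟩ := subset_and_card_of_mem_bal4Quartets hAl
    have hA : A = ∅ := Finset.disjoint_self_iff_empty A |>.mp
      (hLR.mono hAL (subset_and_card_of_mem_bal4Quartets hAr).1)
    simp [hA] at hA4
  have hsplit : Disjoint (bal4Quartets l ∪ bal4Quartets r)
      ((l.leaves.toFinset.powersetCard 2 ×ˢ r.leaves.toFinset.powersetCard 2).image
        (fun p => p.1 ∪ p.2)) := by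
    refine Finset.disjoint_left.mpr fun A hA hsplit => ?_
    have h2 := ((Finset.mem_image_union_powersetCard_product hLR).mp hsplit).2.1
    rcases Finset.mem_union.mp hA with hA | hA <;>
      obtain ⟨hAsub, hA4⟩ := subset_and_card_of_mem_bal4Quartets hA
    · rw [Finset.inter_eq_left.mpr hAsub] at h2
      omega
    · rw [Finset.disjoint_iff_inter_eq_empty.mp (hLR.symm.mono_left hAsub)] at h2
      simp at h2
  rw [bal4Quartets_node h, Finset.card_union_of_disjoint hsplit,
    Finset.card_union_of_disjoint hlr_quartets,
    Finset.card_image_union_powersetCard_product hLR, Multiset.toFinset_card_of_nodup hl,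
    Multiset.toFinset_card_of_nodup hr, card_leaves, card_leaves]

end RBT

theorem labelFrom_snd (u : UTree) (o : ℕ) : (labelFrom u o).2 = o + u.numLeaves := by
  induction u generalizing o with
  | leaf => rfl
  | node l r ihl ihr => simp only [labelFrom, ihl, ihr, RBT.numLeaves]; omega

theorem leaves_labelFrom (u : UTree) (o : ℕ) :
    (labelFrom u o).1.leaves = Multiset.Ico o (o + u.numLeaves) := by
  induction u generalizing o with
  | leaf => simp [labelFrom, RBT.leaves, RBT.numLeaves, Multiset.Ico, Nat.Ico_succ_singleton]
  | node l r ihl ihr =>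
    simp only [labelFrom, RBT.leaves, RBT.numLeaves, ihl, ihr, labelFrom_snd, ← add_assoc]
    exact Multiset.Ico_add_Ico_eq_Ico (by omega) (by omega)

theorem numLeaves_labelFrom (u : UTree) (o : ℕ) : (labelFrom u o).1.numLeaves = u.numLeaves := by
  induction u generalizing o with
  | leaf => rfl
  | node l r ihl ihr => simp only [labelFrom, RBT.numLeaves, ihl, ihr]

theorem numLeaves_fullBal (k : ℕ) : (fullBal k).numLeaves = 2 ^ k := by
  induction k with
  | zero => rfl
  | succ k ih => rw [fullBal, RBT.numLeaves, ih, pow_succ, mul_two]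

def fullBalBal4Count : ℕ → ℕ
  | 0 => 0
  | k + 1 => 2 * fullBalBal4Count k + (2 ^ k).choose 2 ^ 2

theorem card_bal4Quartets_labelFrom_fullBal (k o : ℕ) :
    (RBT.bal4Quartets (labelFrom (fullBal k) o).1).card = fullBalBal4Count k := by
  induction k generalizing o with
  | zero => simp [fullBal, labelFrom, RBT.bal4Quartets_leaf, fullBalBal4Count]
  | succ k ih =>
    have hnode : (labelFrom (fullBal (k + 1)) o).1 =
        .node (labelFrom (fullBal k) o).1 (labelFrom (fullBal k) (o + 2 ^ k)).1 := by
      simp [fullBal, labelFrom, labelFrom_snd, numLeaves_fullBal]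
    have hnodup := leaves_labelFrom (fullBal (k + 1)) o ▸ Multiset.nodup_Ico
    rw [hnode] at hnodup ⊢
    rw [RBT.card_bal4Quartets_node hnodup, ih, ih, numLeaves_labelFrom, numLeaves_labelFrom,
      numLeaves_fullBal, fullBalBal4Count]
    ring

theorem countRestr_fullBal_bal4U (k : ℕ) :
    countRestr (fullBal k) bal4U 4 = fullBalBal4Count k :=
  card_bal4Quartets_labelFrom_fullBal k 0

theorem fullBalBal4Count_succ_eq_sum (j : ℕ) :
    fullBalBal4Count (j + 1) = ∑ i ∈ Finset.Icc 1 j, 2 ^ (j - i) * (2 ^ i).choose 2 ^ 2 := by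
  induction j with
  | zero => rfl
  | succ j ih =>
    rw [fullBalBal4Count, ih, Finset.sum_Icc_succ_top (by omega), Finset.mul_sum, Nat.sub_self,
      pow_zero, one_mul]
    congr 1
    refine Finset.sum_congr rfl fun i hi => ?_
    rw [Finset.mem_Icc] at hi
    rw [Nat.sub_add_comm hi.2, pow_succ]
    ring

theorem cast_fullBalBal4Count (k : ℕ) : (fullBalBal4Count k : ℝ) =
    2 ^ k * (2 ^ k - 1) * (2 ^ k - 2) * (3 * 2 ^ k - 5) / 168 := by
  induction k with
  | zero => simp [fullBalBal4Count]
  | succ k ih =>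
    rw [fullBalBal4Count]
    push_cast [Nat.cast_choose_two, ih, pow_succ]
    ring

theorem cast_choose_four (n : ℕ) :
    (n.choose 4 : ℝ) = n * (n - 1) * (n - 2) * (n - 3) / 24 := by
  simp [Nat.cast_choose_eq_descPochhammer_div, descPochhammer_succ_eval, Nat.factorial]

theorem fullBalBal4Count_div_choose {k : ℕ} (hk : 2 ≤ k) :
    (fullBalBal4Count k : ℝ) / (2 ^ k).choose 4 = (3 * 2 ^ k - 5) / (7 * 2 ^ k - 21) := by
  have hN : (4 : ℝ) ≤ 2 ^ k := by
    calc (4 : ℝ) = 2 ^ 2 := by norm_num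
      _ ≤ 2 ^ k := pow_le_pow_right₀ (by norm_num) hk
  rw [cast_fullBalBal4Count, cast_choose_four]
  push_cast
  rw [div_eq_div_iff (div_ne_zero (by apply_rules [mul_ne_zero] <;> linarith) (by norm_num))
    (by linarith)]
  ring

theorem tendsto_affine_div_affine_atTop {a b c d : ℝ} (hc : 0 < c) :
    Filter.Tendsto (fun x => (a * x - b) / (c * x - d)) Filter.atTop (nhds (a / c)) := by
  have hden : Filter.Tendsto (fun x => c * x - d) Filter.atTop Filter.atTop :=
    Filter.tendsto_atTop_add_const_right _ _ (Filter.tendsto_id.const_mul_atTop hc)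
  have hlim := (tendsto_const_nhds (x := a * d / c - b).div_atTop hden).const_add (a / c)
  rw [add_zero] at hlim
  refine hlim.congr' ?_
  filter_upwards [hden.eventually_gt_atTop 0] with x hx
  field_simp
  ring

/-- For `k ≥ 2`, let `m(k)` be the number of `4`-element subsets
`A` of the leaves of the complete balanced binary tree with `2^k` leaves whose
restriction tree has the balanced shape `Bal_4`.  Then `m` satisfies the
recurrence `m(k) = 2·m(k−1) + C(2^{k−1}, 2)²` (with `m(1) = 0`), has closed form
`m(k) = Σ_{i=1}^{k−1} 2^{k−i−1}·C(2^i, 2)²`, satisfies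
`m(k)/C(2^k, 4) = (3·2^k − 5)/(7·2^k − 21)`, and hence
`m(k)/C(2^k, 4) → 3/7` as `k → ∞`. -/
theorem balanced_bal4_density :
    countRestr (fullBal 1) bal4U 4 = 0 ∧
    (∀ k : ℕ, 2 ≤ k →
      countRestr (fullBal k) bal4U 4 =
        2 * countRestr (fullBal (k - 1)) bal4U 4 + (Nat.choose (2 ^ (k - 1)) 2) ^ 2) ∧
    (∀ k : ℕ, 2 ≤ k →
      countRestr (fullBal k) bal4U 4 =
        ∑ i ∈ Finset.Icc 1 (k - 1), 2 ^ (k - i - 1) * (Nat.choose (2 ^ i) 2) ^ 2) ∧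
    (∀ k : ℕ, 2 ≤ k →
      (countRestr (fullBal k) bal4U 4 : ℝ) / (Nat.choose (2 ^ k) 4 : ℝ) =
        (3 * (2 : ℝ) ^ k - 5) / (7 * (2 : ℝ) ^ k - 21)) ∧
    Filter.Tendsto
      (fun k : ℕ => (countRestr (fullBal k) bal4U 4 : ℝ) / (Nat.choose (2 ^ k) 4 : ℝ))
      Filter.atTop (nhds (3 / 7)) := by
  simp only [countRestr_fullBal_bal4U]
  refine ⟨rfl, fun k hk => ?_, fun k hk => ?_, fun k hk => fullBalBal4Count_div_choose hk, ?_⟩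
  · obtain ⟨j, rfl⟩ : ∃ j, k = j + 1 := ⟨k - 1, by omega⟩
    rw [Nat.add_sub_cancel, fullBalBal4Count]
  · obtain ⟨j, rfl⟩ : ∃ j, k = j + 1 := ⟨k - 1, by omega⟩
    rw [fullBalBal4Count_succ_eq_sum, Nat.add_sub_cancel]
    exact Finset.sum_congr rfl fun i _ => by rw [Nat.sub_right_comm, Nat.add_sub_cancel]
  · have hlim := (tendsto_affine_div_affine_atTop (a := 3) (b := 5) (c := 7) (d := 21)
      (by norm_num)).comp (tendsto_pow_atTop_atTop_of_one_lt one_lt_two)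
    refine hlim.congr' ?_
    filter_upwards [Filter.eventually_ge_atTop 2] with k hk
    exact (fullBalBal4Count_div_choose hk).symm
end

section
/- For integers n ≥ 5, the function f(i) = C(i,2)·C(n−i,3) + C(i,3)·C(n−i,2), defined for 1 ≤ i ≤ n−1, attains its maximum at i = ⌊n/2⌋; that is, f(⌊n/2⌋) ≥ f(i) for all 1 ≤ i ≤ n−1. -/
lemma key12 (a b : ℕ) : 12 * (a.choose 2 * b.choose 3 + a.choose 3 * b.choose 2) =
    a.descFactorial 2 * b.descFactorial 3 + a.descFactorial 3 * b.descFactorial 2 := by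
  rw [Nat.descFactorial_eq_factorial_mul_choose, Nat.descFactorial_eq_factorial_mul_choose,
    Nat.descFactorial_eq_factorial_mul_choose, Nat.descFactorial_eq_factorial_mul_choose]
  simp [Nat.factorial]; ring

lemma keyid (a b : ℕ) : a.descFactorial 2 * b.descFactorial 3 + a.descFactorial 3 * b.descFactorial 2 =
    a.descFactorial 2 * b.descFactorial 2 * ((a-2)+(b-2)) := by
  show a.descFactorial 2 * ((b-2) * b.descFactorial 2) + (a-2) * a.descFactorial 2 * b.descFactorial 2 = _
  ring

lemma prod_le (n i : ℕ) (h3 : i ≤ n) : i * (n - i) ≤ n/2 * (n - n/2) := by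
  obtain ⟨k, hk⟩ : ∃ k, n = 2*k ∨ n = 2*k+1 := ⟨n/2, by omega⟩
  have hm : n/2 = k := by omega
  rw [hm]
  rcases le_or_gt i k with h | h
  · zify [h3, (by omega : k ≤ n)]
    rcases hk with hk | hk <;> subst hk <;> push_cast <;> nlinarith [sq_nonneg ((k:ℤ) - i), (by exact_mod_cast h : (i:ℤ) ≤ k)]
  · zify [h3, (by omega : k ≤ n)]
    rcases hk with hk | hk <;> subst hk <;> push_cast <;> nlinarith [sq_nonneg ((k:ℤ) - i), sq_nonneg ((k:ℤ) + 1 - i), (by exact_mod_cast h : (k:ℤ) < i)]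

lemma g_le (n i : ℕ) (hn : 5 ≤ n) (h2 : 2 ≤ i) (h3 : i + 2 ≤ n) :
    i * (i-1) * ((n-i) * (n-i-1)) ≤ n/2 * (n/2-1) * ((n-n/2) * (n-n/2-1)) := by
  have hkey := prod_le n i (by omega)
  have hm1 : 2 ≤ n/2 := by omega
  have hm2 : n/2 + 2 ≤ n := by omega
  zify [(by omega : 1 ≤ i), (by omega : i ≤ n), (by omega : 1 ≤ n - i), (by omega : 1 ≤ n/2),
    (by omega : n/2 ≤ n), (by omega : 1 ≤ n - n/2)] at *
  set I := (i:ℤ); set N := (n:ℤ); set M := ((n/2 : ℕ):ℤ)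
  have hI2 : (2:ℤ) ≤ I := by exact_mod_cast h2
  have hI3 : I + 2 ≤ N := by exact_mod_cast h3
  have hM1 : (2:ℤ) ≤ M := by exact_mod_cast hm1
  have hM2 : M + 2 ≤ N := by exact_mod_cast hm2
  have hx : N - 1 ≤ I * (N - I) := by nlinarith [mul_nonneg (by linarith : (0:ℤ) ≤ I - 1) (by linarith : (0:ℤ) ≤ N - I - 1)]
  have hxy : I * (N - I) ≤ M * (N - M) := hkey
  nlinarith [mul_nonneg (by linarith : (0:ℤ) ≤ M*(N-M) - I*(N-I)) (by linarith : (0:ℤ) ≤ I*(N-I) + M*(N-M) - N + 1)]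

/-- For integers `n ≥ 5`, the function
`f(i) = C(i,2)·C(n−i,3) + C(i,3)·C(n−i,2)`, defined for `1 ≤ i ≤ n − 1`, attains
its maximum at `i = ⌊n/2⌋`. -/
theorem bicomb_bal5_count_max (n : ℕ) (hn : 5 ≤ n) (i : ℕ) (h1 : 1 ≤ i) (h2 : i ≤ n - 1) :
    Nat.choose i 2 * Nat.choose (n - i) 3 + Nat.choose i 3 * Nat.choose (n - i) 2 ≤
      Nat.choose (n / 2) 2 * Nat.choose (n - n / 2) 3 +
        Nat.choose (n / 2) 3 * Nat.choose (n - n / 2) 2 := by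
  have h12 : (0:ℕ) < 12 := by norm_num
  apply Nat.le_of_mul_le_mul_left _ h12
  rw [key12, key12, keyid, keyid]
  rcases eq_or_lt_of_le h1 with h | h
  · simp [← h, Nat.descFactorial]
  rcases eq_or_lt_of_le h2 with h' | h'
  · have : n - i = 1 := by omega
    simp [this, Nat.descFactorial]
  have hif : (i-2)+(n-i-2) = n - 4 := by omega
  have hmf : (n/2-2)+(n-n/2-2) = n - 4 := by omega
  rw [hif, hmf]
  have := g_le n i hn (by omega) (by omega)
  calc i.descFactorial 2 * (n-i).descFactorial 2 * (n-4)
      = i * (i-1) * ((n-i) * (n-i-1)) * (n-4) := by simp only [Nat.descFactorial, Nat.sub_zero]; ring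
    _ ≤ n/2 * (n/2-1) * ((n-n/2) * (n-n/2-1)) * (n-4) := Nat.mul_le_mul_right _ this
    _ = (n/2).descFactorial 2 * (n-n/2).descFactorial 2 * (n-4) := by simp only [Nat.descFactorial, Nat.sub_zero]; ring
end

section
/- For all positive integers n_1, n_2, n_3, n_4, the quantity [C(n_1,3)·n_2·(n_3+n_4) + C(n_2,3)·n_1·(n_3+n_4) + C(n_3,3)·n_4·(n_1+n_2) + C(n_4,3)·n_3·(n_1+n_2)] − [C(n_1,3)·n_4·(n_2+n_3) + C(n_4,3)·n_1·(n_2+n_3) + C(n_2,3)·n_3·(n_1+n_4) + C(n_3,3)·n_2·(n_1+n_4)] equals (1/6)·(n_1−n_3)·(n_2−n_4)·(n_1·n_3·(n_1+n_3−3) + n_2·n_4·(n_2+n_4−3)). Moreover, if n_1 > n_3, n_2 > n_4, and n_1+n_2+n_3+n_4 ≥ 7, then this quantity is strictly positive. -/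
lemma cast_choose_two' (n : ℕ) : (n.choose 2 : ℝ) = n * (n - 1) / 2 := by
  induction n with
  | zero => simp
  | succ n ih =>
    rw [Nat.choose_succ_succ]
    push_cast [ih, Nat.choose_one_right]
    ring

lemma cast_choose_three' (n : ℕ) : (n.choose 3 : ℝ) = n * (n - 1) * (n - 2) / 6 := by
  induction n with
  | zero => simp
  | succ n ih =>
    rw [Nat.choose_succ_succ]
    push_cast [ih, cast_choose_two']
    ring

lemma aux_pos' (a b c d : ℝ) (h1 : c + 1 ≤ a) (h2 : d + 1 ≤ b) (h3 : 1 ≤ c) (h4 : 1 ≤ d)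
    (h5 : 7 ≤ a + b + c + d) : 0 < a * c * (a + c - 3) + b * d * (b + d - 3) := by
  rcases le_or_gt (7/2) (a + c) with h | h
  · nlinarith [mul_nonneg (mul_nonneg (by linarith : (0:ℝ) ≤ b) (by linarith : (0:ℝ) ≤ d)) (by linarith : (0:ℝ) ≤ b + d - 3), mul_nonneg (by linarith : (0:ℝ) ≤ a - 2) (by linarith : (0:ℝ) ≤ c - 1)]
  · nlinarith [mul_nonneg (mul_nonneg (by linarith : (0:ℝ) ≤ a) (by linarith : (0:ℝ) ≤ c)) (by linarith : (0:ℝ) ≤ a + c - 3), mul_nonneg (by linarith : (0:ℝ) ≤ b - 2) (by linarith : (0:ℝ) ≤ d - 1)]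

/-- For all positive integers `n₁, n₂, n₃, n₄`, the displayed
difference of comb-counting expressions equals
`(1/6)·(n₁−n₃)·(n₂−n₄)·(n₁n₃(n₁+n₃−3) + n₂n₄(n₂+n₄−3))`; moreover it is strictly
positive when `n₁ > n₃`, `n₂ > n₄` and `n₁+n₂+n₃+n₄ ≥ 7`. -/
theorem c5_swap_identity (n1 n2 n3 n4 : ℕ)
    (h1 : 1 ≤ n1) (h2 : 1 ≤ n2) (h3 : 1 ≤ n3) (h4 : 1 ≤ n4) :
    (((n1.choose 3 * n2 * (n3 + n4) + n2.choose 3 * n1 * (n3 + n4) +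
        n3.choose 3 * n4 * (n1 + n2) + n4.choose 3 * n3 * (n1 + n2) : ℕ) : ℝ) -
      ((n1.choose 3 * n4 * (n2 + n3) + n4.choose 3 * n1 * (n2 + n3) +
        n2.choose 3 * n3 * (n1 + n4) + n3.choose 3 * n2 * (n1 + n4) : ℕ) : ℝ) =
      (1 / 6 : ℝ) * ((n1 : ℝ) - n3) * ((n2 : ℝ) - n4) *
        ((n1 : ℝ) * n3 * ((n1 : ℝ) + n3 - 3) + (n2 : ℝ) * n4 * ((n2 : ℝ) + n4 - 3))) ∧
    (n3 < n1 → n4 < n2 → 7 ≤ n1 + n2 + n3 + n4 →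
      0 < ((n1.choose 3 * n2 * (n3 + n4) + n2.choose 3 * n1 * (n3 + n4) +
            n3.choose 3 * n4 * (n1 + n2) + n4.choose 3 * n3 * (n1 + n2) : ℕ) : ℝ) -
          ((n1.choose 3 * n4 * (n2 + n3) + n4.choose 3 * n1 * (n2 + n3) +
            n2.choose 3 * n3 * (n1 + n4) + n3.choose 3 * n2 * (n1 + n4) : ℕ) : ℝ)) := by
  
  have key : (((n1.choose 3 * n2 * (n3 + n4) + n2.choose 3 * n1 * (n3 + n4) +
        n3.choose 3 * n4 * (n1 + n2) + n4.choose 3 * n3 * (n1 + n2) : ℕ) : ℝ) -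
      ((n1.choose 3 * n4 * (n2 + n3) + n4.choose 3 * n1 * (n2 + n3) +
        n2.choose 3 * n3 * (n1 + n4) + n3.choose 3 * n2 * (n1 + n4) : ℕ) : ℝ) =
      (1 / 6 : ℝ) * ((n1 : ℝ) - n3) * ((n2 : ℝ) - n4) *
        ((n1 : ℝ) * n3 * ((n1 : ℝ) + n3 - 3) + (n2 : ℝ) * n4 * ((n2 : ℝ) + n4 - 3))) := by
    push_cast [cast_choose_three']
    ring
  refine ⟨key, fun ha hb hs => ?_⟩
  rw [key]
  have ha' : (n3 : ℝ) + 1 ≤ n1 := by exact_mod_cast ha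
  have hb' : (n4 : ℝ) + 1 ≤ n2 := by exact_mod_cast hb
  have h3' : (1 : ℝ) ≤ n3 := by exact_mod_cast h3
  have h4' : (1 : ℝ) ≤ n4 := by exact_mod_cast h4
  have hs' : (7 : ℝ) ≤ (n1 : ℝ) + n2 + n3 + n4 := by exact_mod_cast hs
  have hE := aux_pos' n1 n2 n3 n4 ha' hb' h3' h4' hs'
  have p1 : (0:ℝ) < (n1:ℝ) - n3 := by linarith
  have p2 : (0:ℝ) < (n2:ℝ) - n4 := by linarith
  exact mul_pos (mul_pos (mul_pos (by norm_num) p1) p2) hE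
end
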